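/- arXiv:1604.02295 — 5 statements merged into one kernel-verified Lean document; each statement's English description precedes it below -/
import Mathlib

section
/- Division rule for Laurent asymptotic expansions: Let A(ε) = a_{h_A} ε^{h_A} + ⋯ + a_{k_A} ε^{k_A} + o_A(ε^{k_A}) and B(ε) = b_{h_B} ε^{h_B} + ⋯ + b_{k_B} ε^{k_B} + o_B(ε^{k_B}) be pivotal Laurent asymptotic expansions on (0, ε₀]. Then there exists 0 < ε₀' ≤ ε₀ such that B(ε) ≠ 0 for all ε ∈ (0, ε₀'], and the function F(ε) = A(ε)/B(ε) admits on (0, ε₀'] a pivotal Laurent asymptotic expansion F(ε) = f_{h_F} ε^{h_F} + ⋯ + f_{k_F} ε^{k_F} + o_F(ε^{k_F}) with parameters h_F = h_A − h_B, k_F = min(k_A − h_B, k_B − 2h_B + h_A) and coefficients determined recursively by f_{h_F + r} = (1/b_{h_B}) ( a_{h_A + r} − Σ_{l=1}^{r} b_{h_B + l} · f_{h_F + r − l} ) for r = 0, …, k_F − h_F; in particular f_{h_F} = a_{h_A}/b_{h_B} ≠ 0. -/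
/-!
Let `F` be the Laurent polynomial with the coefficients `f` of the recursion. The recursion says
exactly that the Cauchy product of `F` with the principal part of `B` reproduces the principal
part of `A` up to the order `hB + kF`, so `A - F * B = o(ε ^ (hB + kF))`. Since
`B ~ b hB * ε ^ hB`, dividing by `B` gives `A / B - F = o(ε ^ kF)`.
-/

open Filter Finset Topology

/-- `lexp f h k c` : the function `f` admits on a right neighbourhood of `0` the Laurent
asymptotic expansion `f ε = c h * ε^h + ⋯ + c k * ε^k + o(ε^k)` as `ε → 0+`. -/
def lexp (f : ℝ → ℝ) (h k : ℤ) (c : ℤ → ℝ) : Prop :=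
  Filter.Tendsto (fun ε : ℝ => (f ε - ∑ l ∈ Finset.Icc h k, c l * ε ^ l) / ε ^ k)
    (nhdsWithin 0 (Set.Ioi 0)) (nhds 0)

open Asymptotics

lemma eventually_ne_zero_nhdsGT : ∀ᶠ ε : ℝ in 𝓝[>] 0, ε ≠ 0 :=
  eventually_mem_nhdsWithin.mono fun _ hε => ne_of_gt hε

lemma zpow_isLittleO_zpow_nhdsGT {p q : ℤ} (hpq : p < q) :
    (fun ε : ℝ => ε ^ q) =o[𝓝[>] 0] fun ε => ε ^ p := by
  have hlim : Tendsto (fun ε : ℝ => ε ^ (q - p)) (𝓝[>] 0) (𝓝 0) := by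
    have := (continuousAt_zpow₀ (0 : ℝ) (q - p) (Or.inr (by omega))).tendsto
    rw [zero_zpow _ (by omega)] at this
    exact this.mono_left nhdsWithin_le_nhds
  refine (((isLittleO_one_iff ℝ).2 hlim).mul_isBigO (isBigO_refl (fun ε : ℝ => ε ^ p) _)).congr'
    ?_ ?_
  · filter_upwards [eventually_ne_zero_nhdsGT] with ε hε
    rw [← zpow_add₀ hε, sub_add_cancel]
  · exact .of_forall fun _ => one_mul _

lemma zpow_isBigO_zpow_nhdsGT {p q : ℤ} (hpq : p ≤ q) :
    (fun ε : ℝ => ε ^ q) =O[𝓝[>] 0] fun ε => ε ^ p :=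
  hpq.eq_or_lt.elim (fun h => h ▸ isBigO_refl _ _) fun h => (zpow_isLittleO_zpow_nhdsGT h).isBigO

lemma lexp_iff_isLittleO {f : ℝ → ℝ} {h k : ℤ} {c : ℤ → ℝ} :
    lexp f h k c ↔
      (fun ε => f ε - ∑ l ∈ Icc h k, c l * ε ^ l) =o[𝓝[>] 0] fun ε => ε ^ k :=
  (isLittleO_iff_tendsto' (eventually_ne_zero_nhdsGT.mono fun _ hε h0 =>
    absurd h0 (zpow_ne_zero _ hε))).symm

section LaurentSum

variable (c : ℤ → ℝ) {s : Finset ℤ}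

lemma isBigO_sum_zpow {p : ℤ} (hs : ∀ l ∈ s, p ≤ l) :
    (fun ε : ℝ => ∑ l ∈ s, c l * ε ^ l) =O[𝓝[>] 0] fun ε => ε ^ p :=
  .fun_sum fun l hl => (zpow_isBigO_zpow_nhdsGT (hs l hl)).const_mul_left (c l)

lemma isLittleO_sum_zpow {p : ℤ} (hs : ∀ l ∈ s, p < l) :
    (fun ε : ℝ => ∑ l ∈ s, c l * ε ^ l) =o[𝓝[>] 0] fun ε => ε ^ p :=
  .fun_sum fun l hl => (zpow_isLittleO_zpow_nhdsGT (hs l hl)).const_mul_left (c l)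

lemma sum_Icc_zpow_sub_sum_Icc_zpow_isLittleO {h N K : ℤ} (hNK : N ≤ K) :
    (fun ε : ℝ => ∑ l ∈ Icc h K, c l * ε ^ l - ∑ l ∈ Icc h N, c l * ε ^ l)
      =o[𝓝[>] 0] fun ε => ε ^ N := by
  have hlow : (Icc h K).filter (· ≤ N) = Icc h N := by
    ext l; simp only [mem_filter, mem_Icc]; omega
  refine (isLittleO_sum_zpow c (s := (Icc h K).filter (¬ · ≤ N)) fun l hl => ?_).congr_left
    fun ε => ?_
  · exact not_le.1 (mem_filter.1 hl).2
  · rw [← sum_filter_add_sum_filter_not (Icc h K) (· ≤ N), hlow, add_sub_cancel_left]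

lemma sum_Icc_zpow_sub_leading_isLittleO {h k : ℤ} (hk : h ≤ k) :
    (fun ε : ℝ => ∑ l ∈ Icc h k, c l * ε ^ l - c h * ε ^ h) =o[𝓝[>] 0] fun ε => ε ^ h := by
  simpa using sum_Icc_zpow_sub_sum_Icc_zpow_isLittleO c (h := h) hk

end LaurentSum

lemma lexp.isEquivalent {B : ℝ → ℝ} {h k : ℤ} {b : ℤ → ℝ} (he : lexp B h k b) (hk : h ≤ k)
    (hb : b h ≠ 0) : B ~[𝓝[>] 0] fun ε => b h * ε ^ h := by
  have hrem := (lexp_iff_isLittleO.1 he).trans_isBigO (zpow_isBigO_zpow_nhdsGT hk)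
  refine ((hrem.add (sum_Icc_zpow_sub_leading_isLittleO b hk)).const_mul_right' ?_).congr_left
    fun ε => ?_
  · exact isUnit_iff_ne_zero.2 hb
  · simp only [Pi.sub_apply]; ring

lemma Asymptotics.IsEquivalent.eventually_ne_zero {α : Type*} {u v : α → ℝ} {l : Filter α}
    (huv : u ~[l] v) (hv : ∀ᶠ x in l, v x ≠ 0) : ∀ᶠ x in l, u x ≠ 0 := by
  filter_upwards [huv.symm.isBigO.eq_zero_imp, hv] with x himp hvx hux using hvx (himp hux)

lemma div_isLittleO_of_isEquivalent {g B : ℝ → ℝ} {c : ℝ} {m k : ℤ}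
    (hg : g =o[𝓝[>] 0] fun ε => ε ^ (m + k)) (hB : B ~[𝓝[>] 0] fun ε => c * ε ^ m) :
    (fun ε => g ε / B ε) =o[𝓝[>] 0] fun ε => ε ^ k := by
  have hinv : (fun ε => (B ε)⁻¹) =O[𝓝[>] 0] fun ε => ε ^ (-m) := by
    refine hB.inv.isBigO.trans
      (((isBigO_refl (fun ε : ℝ => ε ^ (-m)) _).const_mul_left c⁻¹).congr_left fun ε => ?_)
    simp only [Pi.inv_apply, mul_inv, zpow_neg]
  refine (hg.mul_isBigO hinv).congr' (.of_forall fun _ => (div_eq_mul_inv _ _).symm) ?_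
  filter_upwards [eventually_ne_zero_nhdsGT] with ε hε
  rw [← zpow_add₀ hε, add_neg_cancel_comm]

lemma lexp.eventually_ne_zero {B : ℝ → ℝ} {h k : ℤ} {b : ℤ → ℝ} (he : lexp B h k b)
    (hk : h ≤ k) (hb : b h ≠ 0) : ∀ᶠ ε in 𝓝[>] 0, B ε ≠ 0 :=
  (he.isEquivalent hk hb).eventually_ne_zero <|
    eventually_ne_zero_nhdsGT.mono fun _ hε => mul_ne_zero hb (zpow_ne_zero _ hε)

lemma sum_zpow_mul_sum_zpow {K : Type*} [Field K] (u v : ℤ → K) {s t T : Finset ℤ}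
    (hT : ∀ x ∈ s ×ˢ t, x.1 + x.2 ∈ T) {ε : K} (hε : ε ≠ 0) :
    (∑ i ∈ s, u i * ε ^ i) * ∑ j ∈ t, v j * ε ^ j =
      ∑ n ∈ T, (∑ x ∈ s ×ˢ t with x.1 + x.2 = n, u x.1 * v x.2) * ε ^ n := by
  rw [sum_mul_sum, ← sum_product', ← sum_fiberwise_of_maps_to hT]
  refine sum_congr rfl fun n _ => ?_
  rw [sum_mul]
  refine sum_congr rfl fun x hx => ?_
  rw [← (mem_filter.1 hx).2, zpow_add₀ hε]
  ring

lemma sum_filter_add_eq_sum_Icc {M : Type*} [AddCommMonoid M] (g : ℤ → ℤ → M)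
    {p P q Q n : ℤ} (hP : n ≤ P + q) (hQ : n ≤ p + Q) :
    ∑ x ∈ Icc p P ×ˢ Icc q Q with x.1 + x.2 = n, g x.1 x.2 =
      ∑ l ∈ Icc 0 (n - p - q), g (n - q - l) (q + l) := by
  refine sum_nbij' (fun x => x.2 - q) (fun l => (n - q - l, q + l)) ?_ ?_ ?_ ?_ ?_
  · intro x hx
    simp only [mem_filter, mem_product, mem_Icc] at hx ⊢
    omega
  · intro l hl
    simp only [mem_filter, mem_product, mem_Icc] at hl ⊢
    omega
  · intro x hx
    simp only [mem_filter] at hx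
    ext <;> simp only <;> omega
  · intro l _
    simp
  · intro x hx
    simp only [mem_filter] at hx
    congr <;> omega

noncomputable def laurentDivCoeff (a b : ℤ → ℝ) (hA hB : ℤ) (z : ℤ) : ℝ :=
  if z < hA - hB then 0
  else (1 / b hB) * (a (z + hB) - ∑ l ∈ (Icc (1 : ℤ) (z - (hA - hB))).attach,
    b (hB + l) * laurentDivCoeff a b hA hB (z - l))
termination_by (z - (hA - hB)).toNat
decreasing_by have := mem_Icc.1 l.2; omega

lemma laurentDivCoeff_rec (a b : ℤ → ℝ) (hA hB : ℤ) {r : ℤ} (hr : 0 ≤ r) :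
    laurentDivCoeff a b hA hB (hA - hB + r) =
      (1 / b hB) * (a (hA + r) - ∑ l ∈ Icc (1 : ℤ) r,
        b (hB + l) * laurentDivCoeff a b hA hB (hA - hB + r - l)) := by
  rw [laurentDivCoeff, if_neg (by omega), sum_attach (Icc 1 _)
    (fun l => b (hB + l) * laurentDivCoeff a b hA hB (hA - hB + r - l)), add_sub_cancel_left,
    show hA - hB + r + hB = hA + r by ring]

lemma sum_Icc_zero_mul_eq_of_rec {a b f : ℤ → ℝ} {hA hB r : ℤ} (hb : b hB ≠ 0) (hr : 0 ≤ r)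
    (hrec : f (hA - hB + r) = (1 / b hB) *
      (a (hA + r) - ∑ l ∈ Icc (1 : ℤ) r, b (hB + l) * f (hA - hB + r - l))) :
    ∑ l ∈ Icc 0 r, b (hB + l) * f (hA - hB + r - l) = a (hA + r) := by
  have hIcc : Icc 0 r = insert 0 (Icc 1 r) := by
    ext l; simp only [mem_Icc, mem_insert]; omega
  rw [hIcc, sum_insert (by simp), add_zero, sub_zero, hrec]
  field_simp
  ring

lemma sum_zpow_sub_sum_zpow_mul_sum_zpow_isLittleO {a b f : ℤ → ℝ} {hA kA hB kB kF : ℤ}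
    (hBk : hB ≤ kB) (hb : b hB ≠ 0) (hkA : kF ≤ kA - hB) (hkB : kF ≤ kB - 2 * hB + hA)
    (hrec : ∀ r : ℤ, 0 ≤ r → r ≤ kF - (hA - hB) → f (hA - hB + r) =
      (1 / b hB) * (a (hA + r) - ∑ l ∈ Icc (1 : ℤ) r, b (hB + l) * f (hA - hB + r - l))) :
    (fun ε : ℝ => ∑ l ∈ Icc hA kA, a l * ε ^ l -
        (∑ l ∈ Icc (hA - hB) kF, f l * ε ^ l) * ∑ l ∈ Icc hB kB, b l * ε ^ l)
      =o[𝓝[>] 0] fun ε => ε ^ (hB + kF) := by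
  set c : ℤ → ℝ := fun n => ∑ x ∈ Icc (hA - hB) kF ×ˢ Icc hB kB with x.1 + x.2 = n, f x.1 * b x.2
  have hc : ∀ n ∈ Icc hA (hB + kF), c n = a n := by
    intro n hn
    obtain ⟨r, rfl⟩ : ∃ r, n = hA + r := ⟨n - hA, by ring⟩
    have hr := mem_Icc.1 hn
    simp only [c]
    rw [← sum_Icc_zero_mul_eq_of_rec hb (by omega) (hrec r (by omega) (by omega)),
      sum_filter_add_eq_sum_Icc (fun i j => f i * b j) (by omega) (by omega)]
    refine sum_congr (by congr 1; ring) fun l _ => ?_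
    rw [mul_comm]
    congr 2
    ring
  have hprod : ∀ᶠ ε : ℝ in 𝓝[>] 0,
      (∑ l ∈ Icc (hA - hB) kF, f l * ε ^ l) * ∑ l ∈ Icc hB kB, b l * ε ^ l =
        ∑ n ∈ Icc hA (kF + kB), c n * ε ^ n := by
    filter_upwards [eventually_ne_zero_nhdsGT] with ε hε
    refine sum_zpow_mul_sum_zpow f b (fun x hx => ?_) hε
    simp only [mem_product, mem_Icc] at hx ⊢
    omega
  refine ((sum_Icc_zpow_sub_sum_Icc_zpow_isLittleO a (h := hA) (by omega : hB + kF ≤ kA)).sub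
    (sum_Icc_zpow_sub_sum_Icc_zpow_isLittleO c (h := hA) (by omega : hB + kF ≤ kF + kB))).congr'
    ?_ .rfl
  filter_upwards [hprod] with ε hε
  have hlow : ∑ n ∈ Icc hA (hB + kF), c n * ε ^ n = ∑ n ∈ Icc hA (hB + kF), a n * ε ^ n :=
    sum_congr rfl fun n hn => by rw [hc n hn]
  rw [hε, hlow]
  ring

lemma lexp.div {A B : ℝ → ℝ} {hA kA hB kB kF : ℤ} {a b f : ℤ → ℝ} (heA : lexp A hA kA a)
    (heB : lexp B hB kB b) (hBk : hB ≤ kB) (hb : b hB ≠ 0) (hkA : kF ≤ kA - hB)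
    (hkB : kF ≤ kB - 2 * hB + hA)
    (hrec : ∀ r : ℤ, 0 ≤ r → r ≤ kF - (hA - hB) → f (hA - hB + r) =
      (1 / b hB) * (a (hA + r) - ∑ l ∈ Icc (1 : ℤ) r, b (hB + l) * f (hA - hB + r - l))) :
    lexp (fun ε => A ε / B ε) (hA - hB) kF f := by
  set F : ℝ → ℝ := fun ε => ∑ l ∈ Icc (hA - hB) kF, f l * ε ^ l
  have hA' := (lexp_iff_isLittleO.1 heA).trans_isBigO
    (zpow_isBigO_zpow_nhdsGT (by omega : hB + kF ≤ kA))
  have hB' : (fun ε => F ε * (B ε - ∑ l ∈ Icc hB kB, b l * ε ^ l))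
      =o[𝓝[>] 0] fun ε => ε ^ (hB + kF) := by
    refine (((isBigO_sum_zpow f fun l hl => (mem_Icc.1 hl).1).mul_isLittleO
      (lexp_iff_isLittleO.1 heB)).congr' .rfl ?_).trans_isBigO
      (zpow_isBigO_zpow_nhdsGT (by omega : hB + kF ≤ hA - hB + kB))
    filter_upwards [eventually_ne_zero_nhdsGT] with ε hε
    rw [zpow_add₀ hε]
  have hkey : (fun ε => A ε - F ε * B ε) =o[𝓝[>] 0] fun ε => ε ^ (hB + kF) :=
    ((hA'.add (sum_zpow_sub_sum_zpow_mul_sum_zpow_isLittleO hBk hb hkA hkB hrec)).sub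
      hB').congr_left fun ε => by ring
  refine lexp_iff_isLittleO.2 <|
    (div_isLittleO_of_isEquivalent hkey (heB.isEquivalent hBk hb)).congr' ?_ .rfl
  filter_upwards [heB.eventually_ne_zero hBk hb] with ε hε
  rw [sub_div, mul_div_cancel_right₀ _ hε]

theorem div_rule_laurent_general
    (ε₀ : ℝ) (hε₀ : 0 < ε₀)
    (A B : ℝ → ℝ) (hA kA hB kB : ℤ) (a b : ℤ → ℝ)
    (hBk : hB ≤ kB)
    (pivA : a hA ≠ 0) (pivB : b hB ≠ 0)
    (heA : lexp A hA kA a) (heB : lexp B hB kB b) :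
    ∃ ε₀' : ℝ, 0 < ε₀' ∧ ε₀' ≤ ε₀ ∧ (∀ ε ∈ Set.Ioc (0 : ℝ) ε₀', B ε ≠ 0) ∧
      ∃ f : ℤ → ℝ,
        (∀ r : ℤ, 0 ≤ r → r ≤ min (kA - hB) (kB - 2 * hB + hA) - (hA - hB) →
          f (hA - hB + r) =
            (1 / b hB) *
              (a (hA + r) - ∑ l ∈ Finset.Icc (1 : ℤ) r, b (hB + l) * f (hA - hB + r - l))) ∧
        lexp (fun ε => A ε / B ε) (hA - hB) (min (kA - hB) (kB - 2 * hB + hA)) f ∧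
        f (hA - hB) = a hA / b hB ∧ f (hA - hB) ≠ 0 := by
  have hrec := fun r (hr : (0 : ℤ) ≤ r) (_ : r ≤ min (kA - hB) (kB - 2 * hB + hA) - (hA - hB)) =>
    laurentDivCoeff_rec a b hA hB hr
  have hf₀ : laurentDivCoeff a b hA hB (hA - hB) = a hA / b hB := by
    simpa [div_eq_inv_mul] using laurentDivCoeff_rec a b hA hB le_rfl
  obtain ⟨δ, hδ, hBne⟩ := mem_nhdsGT_iff_exists_Ioc_subset.1 (heB.eventually_ne_zero hBk pivB)
  exact ⟨min δ ε₀, lt_min hδ hε₀, min_le_right _ _,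
    fun ε hε => hBne ⟨hε.1, hε.2.trans (min_le_left _ _)⟩, laurentDivCoeff a b hA hB, hrec,
    heA.div heB hBk pivB (min_le_left _ _) (min_le_right _ _) hrec, hf₀,
    hf₀ ▸ div_ne_zero pivA pivB⟩

/-- Division rule for pivotal Laurent asymptotic expansions: there is `0 < ε₀' ≤ ε₀` with
`B ε ≠ 0` on `(0, ε₀']`, and `A/B` admits a pivotal Laurent asymptotic expansion with
leading exponent `hF = hA - hB`, upper exponent `kF = min (kA - hB) (kB - 2 hB + hA)`,
and coefficients determined by the recursion
`f (hF + r) = (1 / b hB) * (a (hA + r) - ∑_{l=1}^{r} b (hB + l) * f (hF + r - l))`. -/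
theorem div_rule_laurent
    (ε₀ : ℝ) (hε₀ : 0 < ε₀) (hε₁ : ε₀ ≤ 1)
    (A B : ℝ → ℝ) (hA kA hB kB : ℤ) (a b : ℤ → ℝ)
    (hAk : hA ≤ kA) (hBk : hB ≤ kB)
    (pivA : a hA ≠ 0) (pivB : b hB ≠ 0)
    (heA : lexp A hA kA a) (heB : lexp B hB kB b) :
    ∃ ε₀' : ℝ, 0 < ε₀' ∧ ε₀' ≤ ε₀ ∧ (∀ ε ∈ Set.Ioc (0 : ℝ) ε₀', B ε ≠ 0) ∧
      ∃ f : ℤ → ℝ,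
        (∀ r : ℤ, 0 ≤ r → r ≤ min (kA - hB) (kB - 2 * hB + hA) - (hA - hB) →
          f (hA - hB + r) =
            (1 / b hB) *
              (a (hA + r) - ∑ l ∈ Finset.Icc (1 : ℤ) r, b (hB + l) * f (hA - hB + r - l))) ∧
        lexp (fun ε => A ε / B ε) (hA - hB) (min (kA - hB) (kB - 2 * hB + hA)) f ∧
        f (hA - hB) = a hA / b hB ∧ f (hA - hB) ≠ 0 :=
  div_rule_laurent_general ε₀ hε₀ A B hA kA hB kB a b hBk pivA pivB heA heB
end

section
/- (Lemma 1(v), scenario H₁.) Under the perturbation conditions (D₁, E₁, H₁), for every i ∈ {0, …, N} the expected return time satisfies E_{ii}(ε) = B_{ii}[0] + B_{ii}[1] ε + ȯ_{ii}(ε) for ε ∈ (0, ε₀], where ȯ_{ii}(ε)/ε → 0 as ε → 0+, B_{ii}[0] = b_i[0] + Σ_{k ∈ {0,…,N}, k ≠ i} b_k[0] A*_{k,i}[0] > 0 and B_{ii}[1] = b_i[1] + Σ_{k ∈ {0,…,N}, k ≠ i} ( b_k[0] A*_{k,i}[1] + b_k[1] A*_{k,i}[0] ), where for k < i the numbers A*_{k,i}[0],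 A*_{k,i}[1] are the first two coefficients in the asymptotic expansion of Γ_{k+1,i,−}(ε)/Γ_{k,i−1,+}(ε) and for k > i they are the first two coefficients in the asymptotic expansion of Γ_{i,k−1,+}(ε)/Γ_{i+1,k,−}(ε). -/
open Filter Finset Topology

noncomputable section

/-- Two-term Laurent asymptotic expansion:
`f ε = c0 * ε^h + c1 * ε^(h+1) + o(ε^(h+1))` as `ε → 0+`. -/
def laurent2 (f : ℝ → ℝ) (h : ℤ) (c0 c1 : ℝ) : Prop :=
  Filter.Tendsto (fun ε : ℝ => (f ε - c0 * ε ^ h - c1 * ε ^ (h + 1)) / ε ^ (h + 1))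
    (nhdsWithin 0 (Set.Ioi 0)) (nhds 0)

/-- `Γ_{i,j,σ}(ε) = p_{i,σ}(ε) p_{i+1,σ}(ε) ⋯ p_{j,σ}(ε)`
(the sign σ is encoded by a `Bool`: `false` = −, `true` = +). -/
def Gam (p : ℕ → Bool → ℝ → ℝ) (σ : Bool) (i j : ℕ) (ε : ℝ) : ℝ :=
  ∏ m ∈ Finset.Icc i j, p m σ ε

/-- `e_i(ε) = e_{i,−}(ε) + e_{i,+}(ε)`. -/
def eT (e : ℕ → Bool → ℝ → ℝ) (i : ℕ) (ε : ℝ) : ℝ := e i false ε + e i true ε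

/-- The expected return time
`E_{ii}(ε) = e_i(ε) + ∑_{k<i} e_k(ε) Γ_{k+1,i,−}(ε)/Γ_{k,i−1,+}(ε)
            + ∑_{i<k≤N} e_k(ε) Γ_{i,k−1,+}(ε)/Γ_{i+1,k,−}(ε)`. -/
def ret (p e : ℕ → Bool → ℝ → ℝ) (N i : ℕ) (ε : ℝ) : ℝ :=
  eT e i ε
    + ∑ k ∈ Finset.range i, eT e k ε * (Gam p false (k + 1) i ε / Gam p true k (i - 1) ε)
    + ∑ k ∈ Finset.Icc (i + 1) N, eT e k ε * (Gam p true i (k - 1) ε / Gam p false (i + 1) k ε)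

/-- The stationary probability `π_i(ε) = e_i(ε) / E_{ii}(ε)`. -/
def statPi (p e : ℕ → Bool → ℝ → ℝ) (N i : ℕ) (ε : ℝ) : ℝ := eT e i ε / ret p e N i ε

/-- `b_i[l] = b_{i,−}[l] + b_{i,+}[l]`. -/
def bT (b : ℕ → Bool → ℕ → ℝ) (i l : ℕ) : ℝ := b i false l + b i true l

/-!
`E_{ii}` is `e_i` plus a finite sum of products `e_k · A*_{k,i}`, where `A*_{k,i}` is the ratio
of products of transition probabilities appearing in its definition. Expansions
`c₀ + c₁ ε + o(ε)` are closed under sums and products (the product of two remainders is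
`O(ε²)`), so the expansion of `E_{ii}` is obtained term by term. For the positivity of
`B_{ii}[0]`: `b_i[0] > 0`, and every `A*_{k,i}[0]` is the limit of a positive ratio, hence
nonnegative.
-/

namespace laurent2

variable {f g : ℝ → ℝ} {h : ℤ} {c₀ c₁ d₀ d₁ : ℝ}

theorem zero_iff :
    laurent2 f 0 c₀ c₁ ↔ Tendsto (fun ε => (f ε - c₀ - c₁ * ε) / ε) (𝓝[>] 0) (𝓝 0) := by
  unfold laurent2
  norm_num

theorem add (hf : laurent2 f h c₀ c₁) (hg : laurent2 g h d₀ d₁) :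
    laurent2 (fun ε => f ε + g ε) h (c₀ + d₀) (c₁ + d₁) := by
  unfold laurent2 at *
  simpa only [add_zero, ← add_div] using (hf.add hg).congr fun ε => by ring

theorem sum {ι : Type*} (s : Finset ι) {F : ι → ℝ → ℝ} {C₀ C₁ : ι → ℝ}
    (hF : ∀ k ∈ s, laurent2 (F k) h (C₀ k) (C₁ k)) :
    laurent2 (fun ε => ∑ k ∈ s, F k ε) h (∑ k ∈ s, C₀ k) (∑ k ∈ s, C₁ k) := by
  induction s using Finset.cons_induction with
  | empty => simp [laurent2]
  | cons a s ha ih =>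
    simp only [Finset.sum_cons]
    exact (hF a (mem_cons_self a s)).add (ih fun k hk => hF k (mem_cons_of_mem hk))

theorem tendsto (hf : laurent2 f 0 c₀ c₁) : Tendsto f (𝓝[>] 0) (𝓝 c₀) := by
  have hid : Tendsto (fun ε : ℝ => ε) (𝓝[>] 0) (𝓝 0) := tendsto_nhdsWithin_of_tendsto_nhds
    tendsto_id
  have hlim := ((zero_iff.1 hf).mul hid).add (tendsto_const_nhds (x := c₀) |>.add
    (tendsto_const_nhds (x := c₁) |>.mul hid))
  simp only [mul_zero, zero_add, add_zero] at hlim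
  refine hlim.congr' ?_
  filter_upwards [self_mem_nhdsWithin] with ε (hε : 0 < ε)
  field_simp
  ring

theorem mul (hf : laurent2 f 0 c₀ c₁) (hg : laurent2 g 0 d₀ d₁) :
    laurent2 (fun ε => f ε * g ε) 0 (c₀ * d₀) (c₀ * d₁ + c₁ * d₀) := by
  have hid : Tendsto (fun ε : ℝ => ε) (𝓝[>] 0) (𝓝 0) := tendsto_nhdsWithin_of_tendsto_nhds
    tendsto_id
  have hgl := hg.tendsto
  rw [zero_iff] at hf hg ⊢
  -- `fg - c₀d₀ - (c₀d₁ + c₁d₀)ε = (f - c₀ - c₁ε) g + (c₀ + c₁ε)(g - d₀ - d₁ε) + c₁d₁ε²`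
  have hlin : Tendsto (fun ε => c₀ + c₁ * ε) (𝓝[>] 0) (𝓝 (c₀ + c₁ * 0)) :=
    tendsto_const_nhds.add (tendsto_const_nhds.mul hid)
  have hlim := ((hf.mul hgl).add (hlin.mul hg)).add (tendsto_const_nhds (x := c₁ * d₁) |>.mul hid)
  simp only [zero_mul, mul_zero, add_zero] at hlim
  refine hlim.congr' ?_
  filter_upwards [self_mem_nhdsWithin] with ε (hε : 0 < ε)
  field_simp
  ring

theorem const_nonneg (hf : laurent2 f 0 c₀ c₁) (hpos : ∀ᶠ ε in 𝓝[>] 0, 0 ≤ f ε) : 0 ≤ c₀ :=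
  ge_of_tendsto hf.tendsto hpos

end laurent2

theorem Gam_pos {p : ℕ → Bool → ℝ → ℝ} {σ : Bool} {i j : ℕ} {ε : ℝ}
    (hp : ∀ m ≤ j, 0 < p m σ ε) : 0 < Gam p σ i j ε :=
  prod_pos fun m hm => hp m (mem_Icc.1 hm).2

/-- The factor `A*_{k,i}(ε)` multiplying `e_k(ε)` in `E_{ii}(ε)` (meaningful for `k ≠ i`). -/
def returnRatio (p : ℕ → Bool → ℝ → ℝ) (i k : ℕ) (ε : ℝ) : ℝ :=
  if k < i then Gam p false (k + 1) i ε / Gam p true k (i - 1) ε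
  else Gam p true i (k - 1) ε / Gam p false (i + 1) k ε

theorem returnRatio_of_lt (p : ℕ → Bool → ℝ → ℝ) {i k : ℕ} (h : k < i) :
    returnRatio p i k = fun ε => Gam p false (k + 1) i ε / Gam p true k (i - 1) ε :=
  funext fun _ => if_pos h

theorem returnRatio_of_gt (p : ℕ → Bool → ℝ → ℝ) {i k : ℕ} (h : i < k) :
    returnRatio p i k = fun ε => Gam p true i (k - 1) ε / Gam p false (i + 1) k ε :=
  funext fun _ => if_neg h.not_gt

theorem returnRatio_pos {p : ℕ → Bool → ℝ → ℝ} {N i k : ℕ} {ε : ℝ}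
    (hp : ∀ m ≤ N, ∀ σ, 0 < p m σ ε) (hi : i ≤ N) (hk : k ≤ N) :
    0 < returnRatio p i k ε := by
  unfold returnRatio
  split_ifs
  all_goals
    exact div_pos (Gam_pos fun m hm => hp m (by omega) _) (Gam_pos fun m hm => hp m (by omega) _)

theorem range_succ_erase_eq_union {N i : ℕ} (hi : i ≤ N) :
    (range (N + 1)).erase i = range i ∪ Icc (i + 1) N := by
  ext k
  simp only [mem_erase, mem_range, mem_union, mem_Icc]
  omega

theorem ret_eq_add_sum_returnRatio (p e : ℕ → Bool → ℝ → ℝ) {N i : ℕ} (hi : i ≤ N) :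
    ret p e N i =
      fun ε => eT e i ε + ∑ k ∈ (range (N + 1)).erase i, eT e k ε * returnRatio p i k ε := by
  funext ε
  have hdisj : Disjoint (range i) (Icc (i + 1) N) :=
    disjoint_left.2 fun k hk hk' => by simp only [mem_range, mem_Icc] at hk hk'; omega
  rw [ret, range_succ_erase_eq_union hi, sum_union hdisj, add_assoc]
  congr 2
  · exact sum_congr rfl fun k hk => by rw [returnRatio_of_lt p (mem_range.1 hk)]
  · exact sum_congr rfl fun k hk => by
      rw [returnRatio_of_gt p (by simp only [mem_Icc] at hk; omega)]

theorem lemma1_v_H1_general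
    (N : ℕ) (ε₀ : ℝ) (hε₀ : 0 < ε₀)
    (p e : ℕ → Bool → ℝ → ℝ)
    (hpos : ∀ i ≤ N, ∀ σ : Bool, ∀ ε ∈ Set.Ioc (0 : ℝ) ε₀, 0 < p i σ ε ∧ 0 < e i σ ε)
    (b : ℕ → Bool → ℕ → ℝ)
    (hE : ∀ i ≤ N, ∀ σ : Bool, 0 < b i σ 0 ∧ laurent2 (e i σ) 0 (b i σ 0) (b i σ 1))
    (As : ℕ → ℕ → ℕ → ℝ)
    (hAslow : ∀ i ≤ N, ∀ k, k < i →
      laurent2 (fun ε => Gam p false (k + 1) i ε / Gam p true k (i - 1) ε) 0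
        (As k i 0) (As k i 1))
    (hAshigh : ∀ i ≤ N, ∀ k, i < k → k ≤ N →
      laurent2 (fun ε => Gam p true i (k - 1) ε / Gam p false (i + 1) k ε) 0
        (As k i 0) (As k i 1)) :
    ∀ i ≤ N,
      laurent2 (ret p e N i) 0
          (bT b i 0 + ∑ k ∈ (Finset.range (N + 1)).erase i, bT b k 0 * As k i 0)
          (bT b i 1 + ∑ k ∈ (Finset.range (N + 1)).erase i,
            (bT b k 0 * As k i 1 + bT b k 1 * As k i 0)) ∧
        0 < bT b i 0 + ∑ k ∈ (Finset.range (N + 1)).erase i, bT b k 0 * As k i 0 := by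
  intro i hi
  have hle {k} (hk : k ∈ (range (N + 1)).erase i) : k ≤ N := by
    have := mem_range.1 (mem_of_mem_erase hk); omega
  have hratio : ∀ k ∈ (range (N + 1)).erase i,
      laurent2 (returnRatio p i k) 0 (As k i 0) (As k i 1) := by
    intro k hk
    rcases (ne_of_mem_erase hk).lt_or_gt with hki | hik
    · rw [returnRatio_of_lt p hki]; exact hAslow i hi k hki
    · rw [returnRatio_of_gt p hik]; exact hAshigh i hi k hik (hle hk)
  have heT : ∀ k ≤ N, laurent2 (eT e k) 0 (bT b k 0) (bT b k 1) := fun k hk =>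
    (hE k hk false).2.add (hE k hk true).2
  have hb : ∀ k ≤ N, 0 < bT b k 0 := fun k hk => add_pos (hE k hk false).1 (hE k hk true).1
  refine ⟨?_, add_pos_of_pos_of_nonneg (hb i hi) (sum_nonneg fun k hk => ?_)⟩
  · rw [ret_eq_add_sum_returnRatio p e hi]
    exact (heT i hi).add (laurent2.sum _ fun k hk => (heT k (hle hk)).mul (hratio k hk))
  · refine mul_nonneg (hb k (hle hk)).le ((hratio k hk).const_nonneg ?_)
    filter_upwards [Ioc_mem_nhdsGT hε₀] with ε hε
    exact (returnRatio_pos (fun m hm σ => (hpos m hm σ ε hε).1) hi (hle hk)).le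

/-- Lemma 1(v), scenario H₁: under conditions (D₁, E₁, H₁), if for each `k ≠ i` the numbers
`As k i 0`, `As k i 1` are the first two coefficients of the asymptotic expansion of
`Γ_{k+1,i,−}(ε)/Γ_{k,i−1,+}(ε)` (for `k < i`) resp. of `Γ_{i,k−1,+}(ε)/Γ_{i+1,k,−}(ε)`
(for `k > i`), then `E_{ii}(ε) = B_{ii}[0] + B_{ii}[1] ε + o(ε)` with
`B_{ii}[0] = b_i[0] + ∑_{k ≠ i} b_k[0] As k i 0 > 0` and
`B_{ii}[1] = b_i[1] + ∑_{k ≠ i} (b_k[0] As k i 1 + b_k[1] As k i 0)`. -/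
theorem lemma1_v_H1
    (N : ℕ) (hN : 1 ≤ N) (ε₀ : ℝ) (hε₀ : 0 < ε₀) (hε₁ : ε₀ ≤ 1)
    (p e : ℕ → Bool → ℝ → ℝ)
    (hpos : ∀ i ≤ N, ∀ σ : Bool, ∀ ε ∈ Set.Ioc (0 : ℝ) ε₀, 0 < p i σ ε ∧ 0 < e i σ ε)
    (hone : ∀ i ≤ N, ∀ ε ∈ Set.Ioc (0 : ℝ) ε₀, p i false ε + p i true ε = 1)
    (a b : ℕ → Bool → ℕ → ℝ)
    (hD : ∀ i ≤ N, ∀ σ : Bool, 0 < a i σ 0 ∧ laurent2 (p i σ) 0 (a i σ 0) (a i σ 1))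
    (hE : ∀ i ≤ N, ∀ σ : Bool, 0 < b i σ 0 ∧ laurent2 (e i σ) 0 (b i σ 0) (b i σ 1))
    (As : ℕ → ℕ → ℕ → ℝ)
    (hAslow : ∀ i ≤ N, ∀ k, k < i →
      laurent2 (fun ε => Gam p false (k + 1) i ε / Gam p true k (i - 1) ε) 0
        (As k i 0) (As k i 1))
    (hAshigh : ∀ i ≤ N, ∀ k, i < k → k ≤ N →
      laurent2 (fun ε => Gam p true i (k - 1) ε / Gam p false (i + 1) k ε) 0
        (As k i 0) (As k i 1)) :
    ∀ i ≤ N,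
      laurent2 (ret p e N i) 0
          (bT b i 0 + ∑ k ∈ (Finset.range (N + 1)).erase i, bT b k 0 * As k i 0)
          (bT b i 1 + ∑ k ∈ (Finset.range (N + 1)).erase i,
            (bT b k 0 * As k i 1 + bT b k 1 * As k i 0)) ∧
        0 < bT b i 0 + ∑ k ∈ (Finset.range (N + 1)).erase i, bT b k 0 * As k i 0 :=
  lemma1_v_H1_general N ε₀ hε₀ p e hpos b hE As hAslow hAshigh
end
end

section
/- (Lemma 2(iv), scenario H₂.) Under the perturbation conditions (D₁, E₁, H₂), for every i ∈ {1, …, N} and 0 ≤ k ≤ i−1 one has Γ_{k+1,i,−}(ε)/Γ_{k,i−1,+}(ε) = A*_{k,i}[−γ_k] ε^{−γ_k} + A*_{k,i}[−γ_k+1] ε^{−γ_k+1} + o*_{k,i}(ε^{−γ_k+1}) for ε ∈ (0, ε₀], where o*_{k,i}(ε^{−γ_k+1})/ε^{−γ_k+1} → 0 as ε → 0+, A*_{k,i}[−γ_k] = A_{k+1,i,−}[0]/A_{k,i−1,+}[γ_k] > 0 and A*_{k,i}[−γ_k+1] = ( A_{k+1,i,−}[1] A_{k,i−1,+}[γ_k]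 − A_{k+1,i,−}[0] A_{k,i−1,+}[γ_k+1] ) / A_{k,i−1,+}[γ_k]², where A_{k+1,i,−}[0], A_{k+1,i,−}[1] are the first two coefficients in the expansion Γ_{k+1,i,−}(ε) = A_{k+1,i,−}[0] + A_{k+1,i,−}[1] ε + o(ε) and A_{k,i−1,+}[γ_k], A_{k,i−1,+}[γ_k+1] are the first two coefficients in the expansion Γ_{k,i−1,+}(ε) = A_{k,i−1,+}[γ_k] ε^{γ_k} + A_{k,i−1,+}[γ_k+1] ε^{γ_k+1} + o(ε^{γ_k+1}). -/
open Filter Finset Topology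

noncomputable section

/-- `γ_i = 1` if `i = 0` and `γ_i = 0` otherwise. -/
def gam (i : ℕ) : ℕ := if i = 0 then 1 else 0

/-- `A_{i,j,+}[γ_i]`, the leading coefficient of `Γ_{i,j,+}(ε)`
(each factor `m` contributes its leading coefficient `a_{m,+}[γ_m]`). -/
def A0p (a : ℕ → Bool → ℕ → ℝ) (i j : ℕ) : ℝ :=
  ∏ m ∈ Finset.Icc i j, a m true (gam m)

/-- `A_{i,j,+}[γ_i + 1] = ∑_{n_i + ⋯ + n_j = 1} a_{i,+}[γ_i + n_i] a_{i+1,+}[n_{i+1}] ⋯ a_{j,+}[n_j]`. -/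
def A1p (a : ℕ → Bool → ℕ → ℝ) (i j : ℕ) : ℝ :=
  ∑ m ∈ Finset.Icc i j, a m true (gam m + 1) * ∏ k ∈ (Finset.Icc i j).erase m, a k true (gam k)

/-- `A_{i,j,−}[0] = a_{i,−}[0] ⋯ a_{j,−}[0]`. -/
def A0m (a : ℕ → Bool → ℕ → ℝ) (i j : ℕ) : ℝ :=
  ∏ m ∈ Finset.Icc i j, a m false 0

/-- `A_{i,j,−}[1] = ∑_{n_i + ⋯ + n_j = 1} a_{i,−}[n_i] ⋯ a_{j,−}[n_j]`. -/
def A1m (a : ℕ → Bool → ℕ → ℝ) (i j : ℕ) : ℝ :=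
  ∑ m ∈ Finset.Icc i j, a m false 1 * ∏ k ∈ (Finset.Icc i j).erase m, a k false 0

/-! `laurent2 f h c₀ c₁` says precisely that `ε ↦ f ε / ε ^ h`, redefined to be `c₀` at `0`,
has right derivative `c₁` at `0`. The expansions of `Γ_{k+1,i,−}` and `Γ_{k,i−1,+}` and of
their quotient are therefore the product and quotient rules for one-sided derivatives.
The order of `Γ_{k,i−1,+}` is `γ_k`, since only the factor `p_{0,+}` vanishes at `ε = 0`. -/

theorem zpow_sum₀ {ι α : Type*} [CommGroupWithZero α] (s : Finset ι) (h : ι → ℤ) {x : α}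
    (hx : x ≠ 0) : x ^ (∑ m ∈ s, h m) = ∏ m ∈ s, x ^ h m := by
  classical
  induction s using Finset.induction_on with
  | empty => simp
  | insert a s ha ih => rw [sum_insert ha, prod_insert ha, zpow_add₀ hx, ih]

def rescale (f : ℝ → ℝ) (h : ℤ) (c : ℝ) : ℝ → ℝ :=
  Function.update (fun ε => f ε / ε ^ h) 0 c

theorem laurent2_iff_hasDerivWithinAt {f : ℝ → ℝ} {h : ℤ} {c0 c1 : ℝ} :
    laurent2 f h c0 c1 ↔ HasDerivWithinAt (rescale f h c0) c1 (Set.Ioi 0) 0 := by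
  rw [hasDerivWithinAt_iff_tendsto_slope' Set.self_notMem_Ioi, ← tendsto_sub_nhds_zero_iff,
    laurent2]
  refine tendsto_congr' ?_
  filter_upwards [self_mem_nhdsWithin] with ε (hε : 0 < ε)
  simp only [rescale, slope_def_field, Function.update_of_ne hε.ne', Function.update_self,
    sub_zero, zpow_add_one₀ hε.ne']
  field_simp

theorem rescale_prod {ι : Type*} (s : Finset ι) (f : ι → ℝ → ℝ) (h : ι → ℤ) (c : ι → ℝ) :
    rescale (fun ε => ∏ m ∈ s, f m ε) (∑ m ∈ s, h m) (∏ m ∈ s, c m)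
      = ∏ m ∈ s, rescale (f m) (h m) (c m) := by
  funext ε
  rw [Finset.prod_apply]
  rcases eq_or_ne ε 0 with rfl | hε
  · simp [rescale]
  · simp [rescale, hε, zpow_sum₀ s h hε, prod_div_distrib]

theorem rescale_div (f g : ℝ → ℝ) (h h' : ℤ) (c d : ℝ) :
    rescale (fun ε => f ε / g ε) (h - h') (c / d) = rescale f h c / rescale g h' d := by
  funext ε
  rcases eq_or_ne ε 0 with rfl | hε
  · simp [rescale]
  · simp [rescale, hε, zpow_sub₀ hε, div_div_div_comm]

theorem laurent2_prod {ι : Type*} [DecidableEq ι] (s : Finset ι) (f : ι → ℝ → ℝ) (h : ι → ℤ)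
    (c0 c1 : ι → ℝ) (hf : ∀ m ∈ s, laurent2 (f m) (h m) (c0 m) (c1 m)) :
    laurent2 (fun ε => ∏ m ∈ s, f m ε) (∑ m ∈ s, h m) (∏ m ∈ s, c0 m)
      (∑ m ∈ s, c1 m * ∏ k ∈ s.erase m, c0 k) := by
  rw [laurent2_iff_hasDerivWithinAt, rescale_prod]
  refine (HasDerivWithinAt.finsetProd fun m hm =>
    laurent2_iff_hasDerivWithinAt.1 (hf m hm)).congr_deriv ?_
  simp [rescale, mul_comm]

theorem laurent2.div {f g : ℝ → ℝ} {h h' : ℤ} {c0 c1 d0 d1 : ℝ}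
    (hf : laurent2 f h c0 c1) (hd0 : d0 ≠ 0) (hg : laurent2 g h' d0 d1) :
    laurent2 (fun ε => f ε / g ε) (h - h') (c0 / d0) ((c1 * d0 - c0 * d1) / d0 ^ 2) := by
  rw [laurent2_iff_hasDerivWithinAt] at hf hg ⊢
  rw [rescale_div]
  simpa [rescale] using hf.div hg (by simpa [rescale] using hd0)

theorem sum_gam_Icc (k j : ℕ) : ∑ m ∈ Icc k j, (gam m : ℤ) = gam k := by
  rcases Nat.eq_zero_or_pos k with rfl | hk
  · simp [gam, Finset.sum_ite_eq']
  · rw [sum_eq_zero fun m hm => by simp [gam, (hk.trans_le (mem_Icc.1 hm).1).ne']]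
    simp [gam, hk.ne']

theorem laurent2_Gam_false {p : ℕ → Bool → ℝ → ℝ} {a : ℕ → Bool → ℕ → ℝ} {i j : ℕ}
    (hp : ∀ m ∈ Icc i j, laurent2 (p m false) 0 (a m false 0) (a m false 1)) :
    laurent2 (Gam p false i j) 0 (A0m a i j) (A1m a i j) := by
  have := laurent2_prod (Icc i j) (fun m => p m false) (fun _ => 0) _ _ hp
  rwa [sum_const_zero] at this

theorem laurent2_Gam_true {p : ℕ → Bool → ℝ → ℝ} {a : ℕ → Bool → ℕ → ℝ} {i j : ℕ}
    (hp : ∀ m ∈ Icc i j, laurent2 (p m true) (gam m) (a m true (gam m)) (a m true (gam m + 1))) :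
    laurent2 (Gam p true i j) (gam i) (A0p a i j) (A1p a i j) := by
  rw [← sum_gam_Icc i j]
  exact laurent2_prod (Icc i j) (fun m => p m true) _ _ _ hp

theorem lemma2_iv_H2_general
    (N : ℕ)
    (p : ℕ → Bool → ℝ → ℝ)
    (a : ℕ → Bool → ℕ → ℝ)
    (hD : ∀ i ≤ N, ∀ σ : Bool, ¬(i = 0 ∧ σ = true) →
      0 < a i σ 0 ∧ laurent2 (p i σ) 0 (a i σ 0) (a i σ 1))
    (hD0 : 0 < a 0 true 1 ∧ laurent2 (p 0 true) 1 (a 0 true 1) (a 0 true 2))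
    :
    ∀ i, 1 ≤ i → i ≤ N → ∀ k, k < i →
      laurent2 (fun ε => Gam p false (k + 1) i ε / Gam p true k (i - 1) ε) (-(gam k : ℤ))
          (A0m a (k + 1) i / A0p a k (i - 1))
          ((A1m a (k + 1) i * A0p a k (i - 1)
              - A0m a (k + 1) i * A1p a k (i - 1)) / (A0p a k (i - 1)) ^ 2) ∧
        0 < A0m a (k + 1) i / A0p a k (i - 1) := by
  intro i _ hiN k _
  have hminus : ∀ m ∈ Icc (k + 1) i,
      0 < a m false 0 ∧ laurent2 (p m false) 0 (a m false 0) (a m false 1) :=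
    fun m hm => hD m ((mem_Icc.1 hm).2.trans hiN) false (by simp)
  have hplus : ∀ m ∈ Icc k (i - 1), 0 < a m true (gam m) ∧
      laurent2 (p m true) (gam m) (a m true (gam m)) (a m true (gam m + 1)) := by
    intro m hm
    rcases eq_or_ne m 0 with rfl | hm0
    · simpa [gam] using hD0
    · have hmN : m ≤ N := ((mem_Icc.1 hm).2.trans (i.sub_le 1)).trans hiN
      simpa [gam, hm0] using hD m hmN true (by simp [hm0])
  have hA0m : 0 < A0m a (k + 1) i := prod_pos fun m hm => (hminus m hm).1
  have hA0p : 0 < A0p a k (i - 1) := prod_pos fun m hm => (hplus m hm).1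
  refine ⟨?_, div_pos hA0m hA0p⟩
  rw [← zero_sub]
  exact (laurent2_Gam_false fun m hm => (hminus m hm).2).div hA0p.ne'
    (laurent2_Gam_true fun m hm => (hplus m hm).2)

/-- Lemma 2(iv), scenario H₂: under conditions (D₁, E₁, H₂), for `1 ≤ i ≤ N` and
`0 ≤ k ≤ i−1`,
`Γ_{k+1,i,−}(ε)/Γ_{k,i−1,+}(ε) = A*_{k,i}[−γ_k] ε^{−γ_k} + A*_{k,i}[−γ_k+1] ε^{−γ_k+1}
+ o(ε^{−γ_k+1})` with `A*_{k,i}[−γ_k] = A_{k+1,i,−}[0]/A_{k,i−1,+}[γ_k] > 0` and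
`A*_{k,i}[−γ_k+1] = (A_{k+1,i,−}[1] A_{k,i−1,+}[γ_k] − A_{k+1,i,−}[0] A_{k,i−1,+}[γ_k+1])
/ A_{k,i−1,+}[γ_k]²`. -/
theorem lemma2_iv_H2
    (N : ℕ) (hN : 1 ≤ N) (ε₀ : ℝ) (hε₀ : 0 < ε₀) (hε₁ : ε₀ ≤ 1)
    (p e : ℕ → Bool → ℝ → ℝ)
    (hpos : ∀ i ≤ N, ∀ σ : Bool, ∀ ε ∈ Set.Ioc (0 : ℝ) ε₀, 0 < p i σ ε ∧ 0 < e i σ ε)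
    (hone : ∀ i ≤ N, ∀ ε ∈ Set.Ioc (0 : ℝ) ε₀, p i false ε + p i true ε = 1)
    (a b : ℕ → Bool → ℕ → ℝ)
    (hD : ∀ i ≤ N, ∀ σ : Bool, ¬(i = 0 ∧ σ = true) →
      0 < a i σ 0 ∧ laurent2 (p i σ) 0 (a i σ 0) (a i σ 1))
    (hD0 : 0 < a 0 true 1 ∧ laurent2 (p 0 true) 1 (a 0 true 1) (a 0 true 2))
    (hE : ∀ i ≤ N, ∀ σ : Bool, ¬(i = 0 ∧ σ = true) →
      0 < b i σ 0 ∧ laurent2 (e i σ) 0 (b i σ 0) (b i σ 1))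
    (hE0 : 0 < b 0 true 1 ∧ laurent2 (e 0 true) 1 (b 0 true 1) (b 0 true 2))
    :
    ∀ i, 1 ≤ i → i ≤ N → ∀ k, k < i →
      laurent2 (fun ε => Gam p false (k + 1) i ε / Gam p true k (i - 1) ε) (-(gam k : ℤ))
          (A0m a (k + 1) i / A0p a k (i - 1))
          ((A1m a (k + 1) i * A0p a k (i - 1)
              - A0m a (k + 1) i * A1p a k (i - 1)) / (A0p a k (i - 1)) ^ 2) ∧
        0 < A0m a (k + 1) i / A0p a k (i - 1) :=
  lemma2_iv_H2_general N p a hD hD0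
end
end

section
/- (Theorem 3(ii), scenario H₂.) Under the perturbation conditions (D₁, E₁, H₂), for every i ∈ {1, …, N} the conditional quasi-stationary probability satisfies π̃_i(ε) = c̃_i[0] + c̃_i[1] ε + õ_i(ε) for ε ∈ (0, ε₀], where õ_i(ε)/ε → 0 as ε → 0+, c̃_i[0] = c_i[1]/d[1] > 0 and c̃_i[1] = ( c_i[2] d[1] − c_i[1] d[2] ) / d[1]², where d[l] = Σ_{j=1}^{N} c_j[l] for l = 1, 2 and, for j ∈ {1, …, N}, c_j[1] > 0 and c_j[2] are the coefficients in the asymptotic expansion π_j(ε) = c_j[1] ε + c_j[2] ε² + o(ε²) of the stationary probability. -/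
open Filter Finset Topology

noncomputable section

/-- The conditional quasi-stationary probability `π̃_i(ε) = π_i(ε) / ∑_{j=1}^{N} π_j(ε)`. -/
def qPi (p e : ℕ → Bool → ℝ → ℝ) (N i : ℕ) (ε : ℝ) : ℝ :=
  statPi p e N i ε / ∑ j ∈ Finset.Icc 1 N, statPi p e N j ε

/-!
The stationary probabilities `π_j` all vanish to first order, so `π̃_i = π_i / ∑ π_j` is a
quotient of two expansions of order `1`. Dividing both by `ε` turns this into a quotient of
expansions of order `0`, and an order-`0` expansion `c₀ + c₁ ε + o(ε)` says exactly that the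
function, extended by `c₀` at `0`, has right derivative `c₁` there; the coefficients of the
quotient then come from the quotient rule.
-/

lemma laurent2_sum {ι : Type*} (s : Finset ι) {f : ι → ℝ → ℝ} {c₀ c₁ : ι → ℝ} {h : ℤ}
    (hf : ∀ j ∈ s, laurent2 (f j) h (c₀ j) (c₁ j)) :
    laurent2 (fun ε => ∑ j ∈ s, f j ε) h (∑ j ∈ s, c₀ j) (∑ j ∈ s, c₁ j) := by
  have hsum := tendsto_finsetSum s hf
  rw [Finset.sum_const_zero] at hsum
  refine hsum.congr fun ε => ?_
  rw [← Finset.sum_div, Finset.sum_sub_distrib, Finset.sum_sub_distrib,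
    ← Finset.sum_mul, ← Finset.sum_mul]

lemma laurent2_iff_div_zpow {f : ℝ → ℝ} {h : ℤ} {c₀ c₁ : ℝ} :
    laurent2 f h c₀ c₁ ↔ laurent2 (fun ε => f ε / ε ^ h) 0 c₀ c₁ := by
  refine tendsto_congr' (eventually_nhdsWithin_of_forall fun ε (hε : 0 < ε) => ?_)
  have hε' : ε ^ h ≠ 0 := zpow_ne_zero h hε.ne'
  dsimp only
  rw [zpow_add₀ hε.ne', zero_add, zpow_zero, zpow_one]
  field_simp

lemma laurent2_zero_iff_hasDerivWithinAt_update {f : ℝ → ℝ} {c₀ c₁ : ℝ} :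
    laurent2 f 0 c₀ c₁ ↔ HasDerivWithinAt (Function.update f 0 c₀) c₁ (Set.Ioi 0) 0 := by
  rw [hasDerivWithinAt_iff_tendsto_slope' Set.self_notMem_Ioi, ← tendsto_sub_nhds_zero_iff]
  refine tendsto_congr' (eventually_nhdsWithin_of_forall fun ε (hε : 0 < ε) => ?_)
  dsimp only
  rw [slope_def_field, Function.update_of_ne hε.ne', Function.update_self, sub_zero, zero_add,
    zpow_zero, zpow_one]
  field_simp

lemma laurent2_zero_div {f g : ℝ → ℝ} {c₀ c₁ d₀ d₁ : ℝ} (hd₀ : d₀ ≠ 0)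
    (hf : laurent2 f 0 c₀ c₁) (hg : laurent2 g 0 d₀ d₁) :
    laurent2 (fun ε => f ε / g ε) 0 (c₀ / d₀) ((c₁ * d₀ - c₀ * d₁) / d₀ ^ 2) := by
  rw [laurent2_zero_iff_hasDerivWithinAt_update] at hf hg ⊢
  have hupdate : Function.update (fun ε => f ε / g ε) 0 (c₀ / d₀)
      = Function.update f 0 c₀ / Function.update g 0 d₀ := by
    ext ε
    rcases eq_or_ne ε 0 with rfl | hε <;> simp [*]
  rw [hupdate]
  simpa only [Function.update_self] using hf.div hg (by rwa [Function.update_self])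

lemma laurent2_div {f g : ℝ → ℝ} {h : ℤ} {c₀ c₁ d₀ d₁ : ℝ} (hd₀ : d₀ ≠ 0)
    (hf : laurent2 f h c₀ c₁) (hg : laurent2 g h d₀ d₁) :
    laurent2 (fun ε => f ε / g ε) 0 (c₀ / d₀) ((c₁ * d₀ - c₀ * d₁) / d₀ ^ 2) := by
  rw [laurent2_iff_div_zpow] at hf hg
  refine tendsto_congr' (eventually_nhdsWithin_of_forall fun ε (hε : 0 < ε) => ?_) |>.mp
    (laurent2_zero_div hd₀ hf hg)
  dsimp only
  rw [div_div_div_cancel_right₀ (zpow_ne_zero h hε.ne')]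

theorem theorem3_ii_H2_general
    (N : ℕ) (hN : 1 ≤ N)
    (p e : ℕ → Bool → ℝ → ℝ)
    (c : ℕ → ℕ → ℝ)
    (hc : ∀ j, 1 ≤ j → j ≤ N → 0 < c j 1 ∧ laurent2 (statPi p e N j) 1 (c j 1) (c j 2)) :
    ∀ i, 1 ≤ i → i ≤ N →
      laurent2 (qPi p e N i) 0
          (c i 1 / ∑ j ∈ Finset.Icc 1 N, c j 1)
          ((c i 2 * (∑ j ∈ Finset.Icc 1 N, c j 1) - c i 1 * ∑ j ∈ Finset.Icc 1 N, c j 2)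
            / (∑ j ∈ Finset.Icc 1 N, c j 1) ^ 2) ∧
        0 < c i 1 / ∑ j ∈ Finset.Icc 1 N, c j 1 := by
  intro i hi₁ hiN
  have hc' : ∀ j ∈ Finset.Icc 1 N, 0 < c j 1 ∧ laurent2 (statPi p e N j) 1 (c j 1) (c j 2) :=
    fun j hj => hc j (Finset.mem_Icc.mp hj).1 (Finset.mem_Icc.mp hj).2
  have hd₁ : 0 < ∑ j ∈ Finset.Icc 1 N, c j 1 :=
    Finset.sum_pos (fun j hj => (hc' j hj).1) ⟨1, Finset.mem_Icc.mpr ⟨le_rfl, hN⟩⟩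
  have hsum := laurent2_sum (Finset.Icc 1 N) fun j hj => (hc' j hj).2
  exact ⟨laurent2_div hd₁.ne' (hc i hi₁ hiN).2 hsum, div_pos (hc i hi₁ hiN).1 hd₁⟩

/-- Theorem 3(ii), scenario H₂: under conditions (D₁, E₁, H₂), if for each `j ∈ {1,…,N}`
the numbers `c j 1 > 0` and `c j 2` are the coefficients in the asymptotic expansion
`π_j(ε) = c_j[1] ε + c_j[2] ε² + o(ε²)`, then, with `d[l] = ∑_{j=1}^{N} c_j[l]`, the
conditional quasi-stationary probabilities satisfy
`π̃_i(ε) = c̃_i[0] + c̃_i[1] ε + o(ε)` with `c̃_i[0] = c_i[1]/d[1] > 0` and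
`c̃_i[1] = (c_i[2] d[1] − c_i[1] d[2]) / d[1]²`. -/
theorem theorem3_ii_H2
    (N : ℕ) (hN : 1 ≤ N) (ε₀ : ℝ) (hε₀ : 0 < ε₀) (hε₁ : ε₀ ≤ 1)
    (p e : ℕ → Bool → ℝ → ℝ)
    (hpos : ∀ i ≤ N, ∀ σ : Bool, ∀ ε ∈ Set.Ioc (0 : ℝ) ε₀, 0 < p i σ ε ∧ 0 < e i σ ε)
    (hone : ∀ i ≤ N, ∀ ε ∈ Set.Ioc (0 : ℝ) ε₀, p i false ε + p i true ε = 1)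
    (a b : ℕ → Bool → ℕ → ℝ)
    (hD : ∀ i ≤ N, ∀ σ : Bool, ¬(i = 0 ∧ σ = true) →
      0 < a i σ 0 ∧ laurent2 (p i σ) 0 (a i σ 0) (a i σ 1))
    (hD0 : 0 < a 0 true 1 ∧ laurent2 (p 0 true) 1 (a 0 true 1) (a 0 true 2))
    (hE : ∀ i ≤ N, ∀ σ : Bool, ¬(i = 0 ∧ σ = true) →
      0 < b i σ 0 ∧ laurent2 (e i σ) 0 (b i σ 0) (b i σ 1))
    (hE0 : 0 < b 0 true 1 ∧ laurent2 (e 0 true) 1 (b 0 true 1) (b 0 true 2))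
    (c : ℕ → ℕ → ℝ)
    (hc : ∀ j, 1 ≤ j → j ≤ N → 0 < c j 1 ∧ laurent2 (statPi p e N j) 1 (c j 1) (c j 2)) :
    ∀ i, 1 ≤ i → i ≤ N →
      laurent2 (qPi p e N i) 0
          (c i 1 / ∑ j ∈ Finset.Icc 1 N, c j 1)
          ((c i 2 * (∑ j ∈ Finset.Icc 1 N, c j 1) - c i 1 * ∑ j ∈ Finset.Icc 1 N, c j 2)
            / (∑ j ∈ Finset.Icc 1 N, c j 1) ^ 2) ∧
        0 < c i 1 / ∑ j ∈ Finset.Icc 1 N, c j 1 :=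
  theorem3_ii_H2_general N hN p e c hc
end
end

section
/- (Theorem 5(i), scenario H₁, order L.) Let L ≥ 1 be an integer and assume the perturbation conditions (D_L, E_L, H₁) hold, and that Σ_{i=0}^{N} π_i(ε) = 1 for all ε ∈ (0, ε₀]. Then for every i ∈ {0, …, N} there exist real coefficients c_i[0], c_i[1], …, c_i[L] such that π_i(ε) = Σ_{l=0}^{L} c_i[l] ε^l + o_i(ε^L) for ε ∈ (0, ε₀], where o_i(ε^L)/ε^L → 0 as ε → 0+, with c_i[0] > 0 for every i ∈ {0, …, N}, Σ_{i=0}^{N} c_i[0] = 1, and Σ_{i=0}^{N} c_i[l] = 0 for every l = 1, …, L. -/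
open Filter Finset Topology

noncomputable section

/-- Taylor asymptotic expansion of order `L`:
`f ε = c 0 + c 1 ε + ⋯ + c L ε^L + o(ε^L)` as `ε → 0+`. -/
def expN (f : ℝ → ℝ) (L : ℕ) (c : ℕ → ℝ) : Prop :=
  Filter.Tendsto (fun ε : ℝ => (f ε - ∑ l ∈ Finset.range (L + 1), c l * ε ^ l) / ε ^ L)
    (nhdsWithin 0 (Set.Ioi 0)) (nhds 0)

open Polynomial Asymptotics

namespace Thm5Aux

/-- The filter `ε → 0+`. -/
def F0 : Filter ℝ := nhdsWithin 0 (Set.Ioi 0)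

lemma Ioc_mem_F0 {a : ℝ} (ha : 0 < a) : Set.Ioc 0 a ∈ F0 :=
  Ioc_mem_nhdsGT_of_mem ⟨le_refl 0, ha⟩

lemma F0_le_nhds : F0 ≤ 𝓝 (0:ℝ) := nhdsWithin_le_nhds

instance : F0.NeBot := by
  unfold F0; infer_instance

/-- Asymptotic expansion with a polynomial as the principal part. -/
def Ex (L : ℕ) (f : ℝ → ℝ) (q : Polynomial ℝ) : Prop :=
  (fun ε => f ε - q.eval ε) =o[F0] (fun ε => ε ^ L)

lemma tendsto_eval (q : Polynomial ℝ) :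
    Tendsto (fun ε => q.eval ε) F0 (𝓝 (q.eval 0)) :=
  (q.continuous.tendsto 0).mono_left F0_le_nhds

lemma pow_isBigO_one (L : ℕ) : (fun ε : ℝ => ε ^ L) =O[F0] (fun _ => (1:ℝ)) := by
  refine IsBigO.of_bound 1 ?_
  filter_upwards [Ioc_mem_F0 one_pos] with ε hε
  have h1 : |ε| ≤ 1 := by rw [abs_of_pos hε.1]; exact hε.2
  have := pow_le_one₀ (abs_nonneg ε) h1 (n := L)
  simpa [abs_pow] using this

lemma Ex.tendsto {L : ℕ} {f : ℝ → ℝ} {q : Polynomial ℝ} (h : Ex L f q) :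
    Tendsto f F0 (𝓝 (q.eval 0)) := by
  have h1 : Tendsto (fun ε => f ε - q.eval ε) F0 (𝓝 0) :=
    (isLittleO_one_iff ℝ).mp (h.trans_isBigO (pow_isBigO_one L))
  have := h1.add (tendsto_eval q)
  simpa using this

lemma Ex.bigO_one {L : ℕ} {f : ℝ → ℝ} {q : Polynomial ℝ} (h : Ex L f q) :
    f =O[F0] (fun _ => (1:ℝ)) := h.tendsto.isBigO_one ℝ

lemma Ex.add {L : ℕ} {f g : ℝ → ℝ} {q r : Polynomial ℝ}
    (hf : Ex L f q) (hg : Ex L g r) : Ex L (fun ε => f ε + g ε) (q + r) := by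
  have := IsLittleO.add hf hg
  refine this.congr' ?_ (EventuallyEq.refl _ _)
  filter_upwards with ε
  simp only [eval_add]; ring

lemma Ex.mul {L : ℕ} {f g : ℝ → ℝ} {q r : Polynomial ℝ}
    (hf : Ex L f q) (hg : Ex L g r) : Ex L (fun ε => f ε * g ε) (q * r) := by
  have h1 : (fun ε => (f ε - q.eval ε) * g ε) =o[F0] (fun ε => ε ^ L) := by
    have := hf.mul_isBigO hg.bigO_one
    simpa using this
  have h2 : (fun ε => q.eval ε * (g ε - r.eval ε)) =o[F0] (fun ε => ε ^ L) := by
    have := ((tendsto_eval q).isBigO_one ℝ).mul_isLittleO hg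
    simpa using this
  have := h1.add h2
  refine this.congr' ?_ (EventuallyEq.refl _ _)
  filter_upwards with ε
  simp [eval_mul]; ring

/-- eval of `X^(L+1) * r` is `o(ε^L)`. -/
lemma Xpow_mul_littleO (L : ℕ) (r : Polynomial ℝ) :
    (fun ε => (X ^ (L+1) * r).eval ε) =o[F0] (fun ε => ε ^ L) := by
  have h : (fun ε : ℝ => ε * r.eval ε) =o[F0] (fun _ => (1:ℝ)) := by
    rw [isLittleO_one_iff]
    have : Tendsto (fun ε : ℝ => ε * r.eval ε) F0 (𝓝 (0 * r.eval 0)) :=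
      (tendsto_id.mono_left F0_le_nhds).mul (tendsto_eval r)
    simpa using this
  have := (isBigO_refl (fun ε : ℝ => ε ^ L) F0).mul_isLittleO h
  refine this.congr' ?_ (by filter_upwards with ε; simp)
  filter_upwards with ε
  simp [eval_mul]; ring

lemma Ex.of_dvd {L : ℕ} {f : ℝ → ℝ} {q q' : Polynomial ℝ}
    (h : Ex L f q) (hd : (X:Polynomial ℝ) ^ (L+1) ∣ q' - q) : Ex L f q' := by
  obtain ⟨r, hr⟩ := hd
  have h2 := Xpow_mul_littleO L r
  have := h.sub h2
  refine this.congr' ?_ (EventuallyEq.refl _ _)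
  filter_upwards with ε
  have : q'.eval ε = q.eval ε + (X ^ (L+1) * r).eval ε := by
    rw [← hr]; simp
  rw [this]; ring

/-- Coefficients of the formal inverse power series of a sequence `c` with `c 0 ≠ 0`. -/
def invCoeff (c : ℕ → ℝ) : ℕ → ℝ
  | n =>
    if h : n = 0 then (c 0)⁻¹
    else -(c 0)⁻¹ * ∑ k ∈ (Finset.Icc 1 n).attach, c k.1 * invCoeff c (n - k.1)
  termination_by n => n
  decreasing_by
    have := Finset.mem_Icc.mp k.2
    omega

lemma invCoeff_zero (c : ℕ → ℝ) : invCoeff c 0 = (c 0)⁻¹ := by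
  rw [invCoeff]; simp

lemma invCoeff_spec (c : ℕ → ℝ) (hc : c 0 ≠ 0) (n : ℕ) :
    ∑ k ∈ Finset.range (n+1), c k * invCoeff c (n - k) = if n = 0 then 1 else 0 := by
  rcases Nat.eq_zero_or_pos n with h | h
  · subst h; simp [invCoeff_zero, hc]
  · have hsplit : Finset.range (n+1) = insert 0 (Finset.Icc 1 n) := by
      ext k; simp [Finset.mem_range, Finset.mem_Icc]; omega
    rw [hsplit, Finset.sum_insert (by simp)]
    have hne : n ≠ 0 := by omega
    have : invCoeff c n = -(c 0)⁻¹ * ∑ k ∈ (Finset.Icc 1 n).attach, c k.1 * invCoeff c (n - k.1) := by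
      rw [invCoeff]; simp [hne]
    rw [Nat.sub_zero, this, Finset.sum_attach (Finset.Icc 1 n) (fun k => c k * invCoeff c (n - k))]
    rw [if_neg hne]
    field_simp
    ring

/-- The polynomial with coefficients `c 0, …, c L`. -/
def poly (L : ℕ) (c : ℕ → ℝ) : Polynomial ℝ :=
  ∑ l ∈ Finset.range (L+1), C (c l) * X ^ l

lemma poly_coeff (L : ℕ) (c : ℕ → ℝ) (n : ℕ) :
    (poly L c).coeff n = if n ≤ L then c n else 0 := by
  rw [poly, finset_sum_coeff]
  simp only [coeff_C_mul, coeff_X_pow, mul_ite, mul_one, mul_zero]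
  rcases le_or_gt n L with h | h
  · rw [Finset.sum_ite_eq (Finset.range (L+1)) n c]
    simp [Nat.lt_succ_iff, h]
  · rw [if_neg (by omega)]
    apply Finset.sum_eq_zero
    intro l hl
    rw [if_neg]
    intro hnl
    exact absurd hnl.symm (by simp at hl; omega)

lemma poly_eval (L : ℕ) (c : ℕ → ℝ) (ε : ℝ) :
    (poly L c).eval ε = ∑ l ∈ Finset.range (L+1), c l * ε ^ l := by
  rw [poly]
  simp [eval_finset_sum]

lemma poly_eval_zero (L : ℕ) (c : ℕ → ℝ) : (poly L c).eval 0 = c 0 := by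
  rw [← coeff_zero_eq_eval_zero, poly_coeff]; simp

/-- The inverse: if `Ex L f q` and `q.eval 0 ≠ 0`, then `f⁻¹` has an expansion. -/
lemma Ex.inv {L : ℕ} {f : ℝ → ℝ} {q : Polynomial ℝ}
    (h : Ex L f q) (h0 : q.eval 0 ≠ 0) :
    ∃ q' : Polynomial ℝ, Ex L (fun ε => (f ε)⁻¹) q' ∧ q'.eval 0 = (q.eval 0)⁻¹ := by
  have hc0 : q.coeff 0 ≠ 0 := by rwa [coeff_zero_eq_eval_zero]
  set d := invCoeff q.coeff with hd
  set q' := poly L d with hq'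
  have hcoeffmul : ∀ n ≤ L, (q * q').coeff n = if n = 0 then 1 else 0 := by
    intro n hn
    rw [coeff_mul, Finset.Nat.sum_antidiagonal_eq_sum_range_succ_mk]
    have : ∀ k ∈ Finset.range (n+1), q.coeff k * q'.coeff (n - k) = q.coeff k * d (n - k) := by
      intro k hk
      rw [hq', poly_coeff, if_pos (by simp at hk; omega)]
    rw [Finset.sum_congr rfl this]
    exact invCoeff_spec q.coeff hc0 n
  have hdvd : (X : Polynomial ℝ) ^ (L+1) ∣ q * q' - 1 := by
    rw [X_pow_dvd_iff]
    intro m hm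
    rw [coeff_sub, hcoeffmul m (by omega), coeff_one]
    simp
  obtain ⟨r, hr⟩ := hdvd
  -- f is eventually nonzero and f⁻¹ is O(1)
  have hfne : ∀ᶠ ε in F0, f ε ≠ 0 := h.tendsto.eventually_ne h0
  have hfinv : Tendsto (fun ε => (f ε)⁻¹) F0 (𝓝 (q.eval 0)⁻¹) := h.tendsto.inv₀ h0
  have hfinvO : (fun ε => (f ε)⁻¹) =O[F0] (fun _ => (1:ℝ)) := hfinv.isBigO_one ℝ
  -- (1 - f * q'.eval) is o(ε^L)
  have h1 : (fun ε => (X ^ (L+1) * r).eval ε) =o[F0] (fun ε => ε ^ L) := Xpow_mul_littleO L r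
  have h2 : (fun ε => (f ε - q.eval ε) * q'.eval ε) =o[F0] (fun ε => ε ^ L) := by
    simpa using h.mul_isBigO ((tendsto_eval q').isBigO_one ℝ)
  have h3 : (fun ε => 1 - f ε * q'.eval ε) =o[F0] (fun ε => ε ^ L) := by
    have := (h1.add h2).neg_left
    refine this.congr' ?_ (EventuallyEq.refl _ _)
    filter_upwards with ε
    have hre : (X ^ (L+1) * r).eval ε = q.eval ε * q'.eval ε - 1 := by
      rw [← hr]; simp [eval_mul]
    rw [hre]; ring
  refine ⟨q', ?_, by rw [hq', poly_eval_zero, hd, invCoeff_zero, coeff_zero_eq_eval_zero]⟩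
  have h4 : (fun ε => (1 - f ε * q'.eval ε) * (f ε)⁻¹) =o[F0] (fun ε => ε ^ L) := by
    simpa using h3.mul_isBigO hfinvO
  refine h4.congr' ?_ (EventuallyEq.refl _ _)
  filter_upwards [hfne] with ε hε
  field_simp

/-- If a polynomial function is `o(ε^L)` at `0+`, its coefficients up to `L` vanish. -/
lemma coeff_eq_zero_of_littleO :
    ∀ (L : ℕ) (q : Polynomial ℝ), (fun ε => q.eval ε) =o[F0] (fun ε => ε ^ L) →
      ∀ l ≤ L, q.coeff l = 0 := by
  intro L
  induction L with
  | zero =>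
    intro q h l hl
    interval_cases l
    have h1 : Tendsto (fun ε => q.eval ε) F0 (𝓝 0) := by
      rw [← isLittleO_one_iff ℝ]
      simpa using h
    have h2 := tendsto_eval q
    rw [coeff_zero_eq_eval_zero]
    exact tendsto_nhds_unique h2 h1
  | succ L ih =>
    intro q h l hl
    have h0 : q.coeff 0 = 0 := by
      have h1 : Tendsto (fun ε => q.eval ε) F0 (𝓝 0) := by
        rw [← isLittleO_one_iff ℝ]
        exact h.trans_isBigO (pow_isBigO_one (L+1))
      rw [coeff_zero_eq_eval_zero]
      exact tendsto_nhds_unique (tendsto_eval q) h1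
    have hq : q = X * q.divX := by
      have := X_mul_divX_add q
      rw [h0] at this
      simpa using this.symm
    have hdiv : (fun ε => q.divX.eval ε) =o[F0] (fun ε => ε ^ L) := by
      have hev : ∀ᶠ ε in F0, ε ^ (L+1) = 0 → q.eval ε = 0 := by
        filter_upwards [Ioc_mem_F0 one_pos] with ε hε
        intro h'
        exact absurd h' (pow_ne_zero _ (ne_of_gt hε.1))
      have ht : Tendsto (fun ε => q.eval ε / ε ^ (L+1)) F0 (𝓝 0) :=
        ((isLittleO_iff_tendsto' hev).mp h)
      have hev2 : ∀ᶠ ε in F0, ε ^ L = 0 → q.divX.eval ε = 0 := by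
        filter_upwards [Ioc_mem_F0 one_pos] with ε hε
        intro h'
        exact absurd h' (pow_ne_zero _ (ne_of_gt hε.1))
      rw [isLittleO_iff_tendsto' hev2]
      refine ht.congr' ?_
      filter_upwards [Ioc_mem_F0 one_pos] with ε hε
      have hεne : ε ≠ 0 := ne_of_gt hε.1
      have hqe : q.eval ε = ε * q.divX.eval ε := by
        conv_lhs => rw [hq]
        simp [eval_mul]
      rw [hqe, pow_succ']
      field_simp
    rcases l with _ | m
    · exact h0
    · have := ih q.divX hdiv m (by omega)
      rwa [coeff_divX] at this

/-- Bridge: `expN` in terms of `Ex`. -/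
lemma expN_iff_Ex {f : ℝ → ℝ} {L : ℕ} {c : ℕ → ℝ} :
    expN f L c ↔ Ex L f (poly L c) := by
  have hev : ∀ᶠ ε in F0, ε ^ L = 0 → f ε - (poly L c).eval ε = 0 := by
    filter_upwards [Ioc_mem_F0 one_pos] with ε hε
    intro h'
    exact absurd h' (pow_ne_zero _ (ne_of_gt hε.1))
  rw [Ex, isLittleO_iff_tendsto' hev, expN]
  constructor <;> intro h <;> refine h.congr' ?_ <;>
    filter_upwards with ε <;> rw [poly_eval]

lemma Ex.toExpN {L : ℕ} {f : ℝ → ℝ} {q : Polynomial ℝ} (h : Ex L f q) :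
    expN f L (fun l => q.coeff l) := by
  rw [expN_iff_Ex]
  refine h.of_dvd ?_
  rw [X_pow_dvd_iff]
  intro m hm
  rw [coeff_sub, poly_coeff, if_pos (by omega), sub_self]

/-- Uniqueness of expansion coefficients. -/
lemma expN_unique {f : ℝ → ℝ} {L : ℕ} {c c' : ℕ → ℝ}
    (h : expN f L c) (h' : expN f L c') : ∀ l ≤ L, c l = c' l := by
  rw [expN_iff_Ex] at h h'
  intro l hl
  have hsub : (fun ε => (poly L c - poly L c').eval ε) =o[F0] (fun ε => ε ^ L) := by
    have := h'.sub h
    refine this.congr' ?_ (EventuallyEq.refl _ _)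
    filter_upwards with ε
    simp only [eval_sub]; ring
  have := coeff_eq_zero_of_littleO L _ hsub l hl
  rw [coeff_sub, poly_coeff, poly_coeff, if_pos hl, if_pos hl] at this
  linarith

/-- A function with an order-`L` expansion at `0+` with positive constant term. -/
def Good (L : ℕ) (f : ℝ → ℝ) : Prop :=
  ∃ q : Polynomial ℝ, Ex L f q ∧ 0 < q.eval 0

lemma Ex_const_one (L : ℕ) : Ex L (fun _ => (1:ℝ)) 1 := by
  have : (fun ε : ℝ => (1:ℝ) - (1:Polynomial ℝ).eval ε) = fun _ => 0 := by
    funext ε; simp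
  rw [Ex, this]
  exact isLittleO_zero _ _

lemma Ex_const_zero (L : ℕ) : Ex L (fun _ => (0:ℝ)) 0 := by
  have : (fun ε : ℝ => (0:ℝ) - (0:Polynomial ℝ).eval ε) = fun _ => 0 := by
    funext ε; simp
  rw [Ex, this]
  exact isLittleO_zero _ _

lemma Good.add {L : ℕ} {f g : ℝ → ℝ} (hf : Good L f) (hg : Good L g) :
    Good L (fun ε => f ε + g ε) := by
  obtain ⟨q, hq, hq0⟩ := hf
  obtain ⟨r, hr, hr0⟩ := hg
  exact ⟨q + r, hq.add hr, by simp [eval_add]; linarith⟩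

lemma Good.mul {L : ℕ} {f g : ℝ → ℝ} (hf : Good L f) (hg : Good L g) :
    Good L (fun ε => f ε * g ε) := by
  obtain ⟨q, hq, hq0⟩ := hf
  obtain ⟨r, hr, hr0⟩ := hg
  exact ⟨q * r, hq.mul hr, by simp only [eval_mul]; positivity⟩

lemma Good.inv {L : ℕ} {f : ℝ → ℝ} (hf : Good L f) :
    Good L (fun ε => (f ε)⁻¹) := by
  obtain ⟨q, hq, hq0⟩ := hf
  obtain ⟨q', hq', hq'0⟩ := hq.inv (ne_of_gt hq0)
  exact ⟨q', hq', by rw [hq'0]; positivity⟩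

lemma Good.div {L : ℕ} {f g : ℝ → ℝ} (hf : Good L f) (hg : Good L g) :
    Good L (fun ε => f ε / g ε) := by
  have := hf.mul hg.inv
  simpa [div_eq_mul_inv] using this

lemma Good.prod {L : ℕ} {ι : Type*} (s : Finset ι) (f : ι → ℝ → ℝ)
    (h : ∀ i ∈ s, Good L (f i)) : Good L (fun ε => ∏ i ∈ s, f i ε) := by
  classical
  induction s using Finset.cons_induction with
  | empty => exact ⟨1, Ex_const_one L, by simp⟩
  | cons i s hi ih =>
    have h1 : Good L (f i) := h i (Finset.mem_cons_self i s)
    have h2 : Good L (fun ε => ∏ j ∈ s, f j ε) := ih (fun j hj => h j (Finset.mem_cons_of_mem hj))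
    have := h1.mul h2
    have heq : (fun ε => ∏ x ∈ Finset.cons i s hi, f x ε)
        = fun ε => f i ε * ∏ j ∈ s, f j ε := by
      funext ε; rw [Finset.prod_cons]
    rw [Good, heq]
    exact this

/-- Sums of Good functions have an expansion with nonnegative constant term. -/
lemma sum_good {L : ℕ} {ι : Type*} (s : Finset ι) (f : ι → ℝ → ℝ)
    (h : ∀ i ∈ s, Good L (f i)) :
    ∃ q : Polynomial ℝ, Ex L (fun ε => ∑ i ∈ s, f i ε) q ∧ 0 ≤ q.eval 0 := by
  classical
  induction s using Finset.cons_induction with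
  | empty => exact ⟨0, Ex_const_zero L, by simp⟩
  | cons i s hi ih =>
    obtain ⟨q, hq, hq0⟩ := h i (Finset.mem_cons_self i s)
    obtain ⟨r, hr, hr0⟩ := ih (fun j hj => h j (Finset.mem_cons_of_mem hj))
    refine ⟨q + r, ?_, by simp [eval_add]; linarith⟩
    have := hq.add hr
    refine this.congr' ?_ (EventuallyEq.refl _ _)
    filter_upwards with ε
    rw [Finset.sum_cons]

lemma Good.toExpN {L : ℕ} {f : ℝ → ℝ} (hf : Good L f) :
    ∃ c : ℕ → ℝ, expN f L c ∧ 0 < c 0 := by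
  obtain ⟨q, hq, hq0⟩ := hf
  refine ⟨fun l => q.coeff l, hq.toExpN, ?_⟩
  show 0 < q.coeff 0
  rwa [coeff_zero_eq_eval_zero]

/-- expN of a finite sum. -/
lemma expN_sum {L : ℕ} {ι : Type*} (s : Finset ι) (f : ι → ℝ → ℝ) (c : ι → ℕ → ℝ)
    (h : ∀ i ∈ s, expN (f i) L (c i)) :
    expN (fun ε => ∑ i ∈ s, f i ε) L (fun l => ∑ i ∈ s, c i l) := by
  rw [expN]
  have key : ∀ ε : ℝ, ((∑ i ∈ s, f i ε) - ∑ l ∈ Finset.range (L+1), (∑ i ∈ s, c i l) * ε ^ l) / ε ^ L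
      = ∑ i ∈ s, (f i ε - ∑ l ∈ Finset.range (L+1), c i l * ε ^ l) / ε ^ L := by
    intro ε
    rw [← Finset.sum_div]
    congr 1
    have h1 : ∑ l ∈ Finset.range (L+1), (∑ i ∈ s, c i l) * ε ^ l
        = ∑ i ∈ s, ∑ l ∈ Finset.range (L+1), c i l * ε ^ l := by
      rw [Finset.sum_comm]
      exact Finset.sum_congr rfl fun l _ => Finset.sum_mul _ _ _
    rw [h1, ← Finset.sum_sub_distrib]
  have := tendsto_finset_sum s (fun i hi => h i hi)
  rw [Finset.sum_const, smul_zero] at this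
  exact (this.congr (fun ε => (key ε).symm))



end Thm5Aux

open Thm5Aux Polynomial Asymptotics

/-- Theorem 5(i), scenario H₁, order `L`: under conditions (D_L, E_L, H₁), and assuming
`∑_{i=0}^{N} π_i(ε) = 1` on `(0, ε₀]`, each stationary probability admits an asymptotic
expansion `π_i(ε) = ∑_{l=0}^{L} c_i[l] ε^l + o(ε^L)` with `c_i[0] > 0`,
`∑_i c_i[0] = 1` and `∑_i c_i[l] = 0` for `1 ≤ l ≤ L`. -/
theorem theorem5_i_H1
    (N : ℕ) (hN : 1 ≤ N) (ε₀ : ℝ) (hε₀ : 0 < ε₀) (hε₁ : ε₀ ≤ 1)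
    (L : ℕ) (hL : 1 ≤ L)
    (p e : ℕ → Bool → ℝ → ℝ)
    (hpos : ∀ i ≤ N, ∀ σ : Bool, ∀ ε ∈ Set.Ioc (0 : ℝ) ε₀, 0 < p i σ ε ∧ 0 < e i σ ε)
    (hone : ∀ i ≤ N, ∀ ε ∈ Set.Ioc (0 : ℝ) ε₀, p i false ε + p i true ε = 1)
    (a b : ℕ → Bool → ℕ → ℝ)
    (hD : ∀ i ≤ N, ∀ σ : Bool, 0 < a i σ 0 ∧ expN (p i σ) L (a i σ))
    (hE : ∀ i ≤ N, ∀ σ : Bool, 0 < b i σ 0 ∧ expN (e i σ) L (b i σ))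
    (hsum : ∀ ε ∈ Set.Ioc (0 : ℝ) ε₀, ∑ i ∈ Finset.range (N + 1), statPi p e N i ε = 1) :
    ∃ c : ℕ → ℕ → ℝ,
      (∀ i ≤ N, expN (statPi p e N i) L (c i) ∧ 0 < c i 0) ∧
      (∑ i ∈ Finset.range (N + 1), c i 0 = 1) ∧
      (∀ l, 1 ≤ l → l ≤ L → ∑ i ∈ Finset.range (N + 1), c i l = 0) := by
  classical
  open Thm5Aux in
  have hGoodp : ∀ m ≤ N, ∀ σ : Bool, Good L (p m σ) := by
    intro m hm σ
    exact ⟨poly L (a m σ), expN_iff_Ex.mp (hD m hm σ).2, by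
      rw [poly_eval_zero]; exact (hD m hm σ).1⟩
  have hGoode : ∀ m ≤ N, ∀ σ : Bool, Good L (e m σ) := by
    intro m hm σ
    exact ⟨poly L (b m σ), expN_iff_Ex.mp (hE m hm σ).2, by
      rw [poly_eval_zero]; exact (hE m hm σ).1⟩
  have hGoodeT : ∀ m ≤ N, Good L (eT e m) := by
    intro m hm
    exact (hGoode m hm false).add (hGoode m hm true)
  have hGoodGam : ∀ (σ : Bool) (i j : ℕ), j ≤ N → Good L (fun ε => Gam p σ i j ε) := by
    intro σ i j hj
    exact Good.prod (Finset.Icc i j) (fun m => p m σ)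
      (fun m hm => hGoodp m (le_trans (Finset.mem_Icc.mp hm).2 hj) σ)
  have hGoodRet : ∀ i ≤ N, Good L (ret p e N i) := by
    intro i hi
    obtain ⟨qe, hqe, hqe0⟩ := hGoodeT i hi
    obtain ⟨q1, hq1, hq10⟩ := sum_good (Finset.range i)
      (fun k ε => eT e k ε * (Gam p false (k + 1) i ε / Gam p true k (i - 1) ε))
      (fun k hk => (hGoodeT k (by simp at hk; omega)).mul
        ((hGoodGam false (k+1) i hi).div (hGoodGam true k (i-1) (by omega))))
    obtain ⟨q2, hq2, hq20⟩ := sum_good (Finset.Icc (i+1) N)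
      (fun k ε => eT e k ε * (Gam p true i (k - 1) ε / Gam p false (i + 1) k ε))
      (fun k hk => by
        have hk' := Finset.mem_Icc.mp hk
        exact (hGoodeT k hk'.2).mul
          ((hGoodGam true i (k-1) (by omega)).div (hGoodGam false (i+1) k hk'.2)))
    refine ⟨qe + q1 + q2, ?_, by simp only [eval_add]; linarith⟩
    exact (hqe.add hq1).add hq2
  have hGoodPi : ∀ i ≤ N, Good L (statPi p e N i) := by
    intro i hi
    exact (hGoodeT i hi).div (hGoodRet i hi)
  have key : ∀ i : ℕ, ∃ ci : ℕ → ℝ, i ≤ N → (expN (statPi p e N i) L ci ∧ 0 < ci 0) := by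
    intro i
    by_cases hi : i ≤ N
    · obtain ⟨ci, h1, h2⟩ := (hGoodPi i hi).toExpN
      exact ⟨ci, fun _ => ⟨h1, h2⟩⟩
    · exact ⟨fun _ => 0, fun h' => absurd h' hi⟩
  choose c hc using key
  refine ⟨c, fun i hi => hc i hi, ?_, ?_⟩
  all_goals {
    have hsum_exp : expN (fun ε => ∑ i ∈ Finset.range (N+1), statPi p e N i ε) L
        (fun l => ∑ i ∈ Finset.range (N+1), c i l) :=
      expN_sum _ _ _ (fun i hi => (hc i (Finset.mem_range_succ_iff.mp hi)).1)
    have hone_exp : expN (fun _ => (1:ℝ)) L (fun l => ∑ i ∈ Finset.range (N+1), c i l) := by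
      refine hsum_exp.congr' ?_
      filter_upwards [Ioc_mem_F0 hε₀] with ε hε
      rw [hsum ε hε]
    have hdelta : expN (fun _ => (1:ℝ)) L (fun l => if l = 0 then (1:ℝ) else 0) := by
      have hs : ∀ ε : ℝ, ∑ l ∈ Finset.range (L+1), (if l = 0 then (1:ℝ) else 0) * ε ^ l = 1 := by
        intro ε
        rw [Finset.sum_eq_single 0] <;> simp +contextual
      rw [expN]
      have : (fun ε : ℝ => ((1:ℝ) - ∑ l ∈ Finset.range (L + 1),
          (if l = 0 then (1:ℝ) else 0) * ε ^ l) / ε ^ L) = fun _ => 0 := by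
        funext ε; rw [hs ε]; simp
      rw [this]
      exact tendsto_const_nhds
    have huniq := expN_unique hone_exp hdelta
    first
    | · exact (huniq 0 (Nat.zero_le L)).trans (by simp)
    | · intro l hl1 hl2
        exact (huniq l hl2).trans (by simp; omega)
  }
end
end
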